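/- Assume m ≥ 3 and let {u_1, …, u_{m−1}} be an orthonormal basis of D2. Then for any indices p ≠ j: 0 = (η(η + λ1/2) − 4⟨L(u_j,u_p),L(u_j,u_p)⟩)·L(u_j,u_p) − Σ_{i ≠ p} 4⟨L(u_j,u_i),L(u_j,u_p)⟩·L(u_i,u_j). In particular, if L(u_1,u_2) ≠ 0 and L(u_1,u_i) is orthogonal to L(u_1,u_2) for all i ≠ 2, then ⟨L(u_1,u_2),L(u_1,u_2)⟩ = (1/4)η(η + λ1/2) = τ. -/

import Mathlib

open scoped RealInnerProductSpace
open Module Submodule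

noncomputable section

variable {V : Type*} [NormedAddCommGroup V] [InnerProductSpace ℝ V]

/-- The curvature-type operator built from `ε` and the difference tensor `K`:
`R(X,Y)Z = ε(⟨Y,Z⟩X − ⟨X,Z⟩Y) − K(X,K(Y,Z)) + K(Y,K(X,Z))`. -/
def Rc (ε : ℝ) (K : V →ₗ[ℝ] V →ₗ[ℝ] V) (X Y Z : V) : V :=
  ε • (⟪Y, Z⟫ • X - ⟪X, Z⟫ • Y) - K X (K Y Z) + K Y (K X Z)

/-- The bilinear map `L(v₁,v₂) = K(v₁,v₂) − (λ₁/2)⟨v₁,v₂⟩ e₁`. -/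
def Lop (lam1 : ℝ) (e1 : V) (K : V →ₗ[ℝ] V →ₗ[ℝ] V) (v1 v2 : V) : V :=
  K v1 v2 - (lam1 / 2 * ⟪v1, v2⟫) • e1

/-- The distribution `D₂ = {v : v ⟂ e₁, K(e₁,v) = (λ₁/2)v}`. -/
def D2s (lam1 : ℝ) (e1 : V) (K : V →ₗ[ℝ] V →ₗ[ℝ] V) : Submodule ℝ V :=
  (ℝ ∙ e1)ᗮ ⊓ Module.End.eigenspace (K e1) (lam1 / 2)

/-- The distribution `D₃ = {w : w ⟂ e₁, K(e₁,w) = μw}`. -/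
def D3s (mu : ℝ) (e1 : V) (K : V →ₗ[ℝ] V →ₗ[ℝ] V) : Submodule ℝ V :=
  (ℝ ∙ e1)ᗮ ⊓ Module.End.eigenspace (K e1) mu

/-- The operator `P_v(ṽ) = K(v, L(v,ṽ))`, as a linear endomorphism of `V`. -/
def Pop (lam1 : ℝ) (e1 : V) (K : V →ₗ[ℝ] V →ₗ[ℝ] V) (v : V) : V →ₗ[ℝ] V :=
  (K v) ∘ₗ (K v - (lam1 / 2) •
    ((LinearMap.toSpanSingleton ℝ V e1) ∘ₗ (innerSL ℝ v).toLinearMap))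

/-- The eigenspace `V_v(c)` of `P_v` within the orthogonal complement of `v` in `D₂`. -/
def Vvs (lam1 c : ℝ) (e1 : V) (K : V →ₗ[ℝ] V →ₗ[ℝ] V) (v : V) : Submodule ℝ V :=
  D2s lam1 e1 K ⊓ (ℝ ∙ v)ᗮ ⊓ Module.End.eigenspace (Pop lam1 e1 K v) c

/-!
Parallelism of the cubic form, evaluated on the eigenspace decomposition `ℝ e1 ⊕ D₂ ⊕ D₃` of
`K e1`, pins down the curvature operator on these pieces and turns into a cyclic identity for
`K(v, L(v', v''))` and a formula for `K(w, L(v, v'))` with `w ∈ D₃`. For a unit `v ∈ D₂` and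
`v' ⟂ v` in `D₂`, computing `K(L(v, v), L(v, v'))` in two ways from these gives
`4 K(v, K(v, L(v, v'))) = η(η + λ₁/2) L(v, v')`. Expanding `K(v, L(v, v')) ∈ D₂` in the
orthonormal basis, with coefficients `⟨L(v, uᵢ), L(v, v')⟩`, yields the linear relation; the
`e1`-component drops out because `L(v, v) ⟂ L(v, v')`, which follows by pairing the previous
identity with `e1`.
-/

theorem mem_D3s_iff {c : ℝ} {e1 w : V} {K : V →ₗ[ℝ] V →ₗ[ℝ] V} :
    w ∈ D3s c e1 K ↔ ⟪e1, w⟫ = 0 ∧ K e1 w = c • w := by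
  simp only [D3s, Submodule.mem_inf, Submodule.mem_orthogonal_singleton_iff_inner_right,
    Module.End.mem_eigenspace_iff]

theorem mem_D2s_iff {lam1 : ℝ} {e1 v : V} {K : V →ₗ[ℝ] V →ₗ[ℝ] V} :
    v ∈ D2s lam1 e1 K ↔ ⟪e1, v⟫ = 0 ∧ K e1 v = (lam1 / 2) • v :=
  mem_D3s_iff

theorem inner_eq_zero_of_mem_D3s {c d : ℝ} {e1 v w : V} {K : V →ₗ[ℝ] V →ₗ[ℝ] V}
    (hK : ∀ X Y Z : V, ⟪K X Y, Z⟫ = ⟪K X Z, Y⟫) (hcd : c ≠ d)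
    (hv : v ∈ D3s c e1 K) (hw : w ∈ D3s d e1 K) : ⟪v, w⟫ = 0 := by
  have hsymm : (K e1).IsSymmetric := fun x y => by rw [hK, real_inner_comm]
  exact hsymm.orthogonalFamily_eigenspaces hcd ⟨v, (Submodule.mem_inf.1 hv).2⟩
    ⟨w, (Submodule.mem_inf.1 hw).2⟩

theorem K_e1_e1_eq_of_sup_eq_top {c d lam1 : ℝ} {e1 : V} {K : V →ₗ[ℝ] V →ₗ[ℝ] V}
    (hK : ∀ X Y Z : V, ⟪K X Y, Z⟫ = ⟪K X Z, Y⟫) (he1 : ‖e1‖ = 1)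
    (hlam1 : lam1 = ⟪K e1 e1, e1⟫) (hsplit : (ℝ ∙ e1) ⊔ D3s c e1 K ⊔ D3s d e1 K = ⊤) :
    K e1 e1 = lam1 • e1 := by
  set y := K e1 e1 - lam1 • e1
  have hD3 : ∀ c, D3s c e1 K ≤ (ℝ ∙ y)ᗮ := fun c w hw => by
    obtain ⟨hw1, hw2⟩ := mem_D3s_iff.1 hw
    rw [Submodule.mem_orthogonal_singleton_iff_inner_right, inner_sub_left, hK, hw2,
      real_inner_smul_left, real_inner_smul_left, real_inner_comm, hw1]
    ring
  have he1y : ℝ ∙ e1 ≤ (ℝ ∙ y)ᗮ := by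
    rw [Submodule.span_singleton_le_iff_mem, Submodule.mem_orthogonal_singleton_iff_inner_right,
      inner_sub_left, real_inner_smul_left, real_inner_self_eq_norm_sq, he1, ← hlam1]
    ring
  have hy : (ℝ ∙ y)ᗮ = ⊤ := top_unique (hsplit ▸ sup_le (sup_le he1y (hD3 c)) (hD3 d))
  rwa [Submodule.orthogonal_eq_top_iff, Submodule.span_singleton_eq_bot, sub_eq_zero] at hy

theorem Rc_add_right (ε : ℝ) (K : V →ₗ[ℝ] V →ₗ[ℝ] V) (X Y Z U : V) :
    Rc ε K X Y (Z + U) = Rc ε K X Y Z + Rc ε K X Y U := by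
  simp only [Rc, inner_add_right, map_add]
  module

theorem Rc_smul_right (ε : ℝ) (K : V →ₗ[ℝ] V →ₗ[ℝ] V) (c : ℝ) (X Y Z : V) :
    Rc ε K X Y (c • Z) = c • Rc ε K X Y Z := by
  simp only [Rc, real_inner_smul_right, map_smul]
  module

theorem K_eq_Lop_add (lam1 : ℝ) (e1 : V) (K : V →ₗ[ℝ] V →ₗ[ℝ] V) (v v' : V) :
    K v v' = Lop lam1 e1 K v v' + (lam1 / 2 * ⟪v, v'⟫) • e1 := by
  rw [Lop, sub_add_cancel]

theorem Lop_comm {lam1 : ℝ} {e1 : V} {K : V →ₗ[ℝ] V →ₗ[ℝ] V} (hK : ∀ X Y : V, K X Y = K Y X)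
    (v v' : V) : Lop lam1 e1 K v v' = Lop lam1 e1 K v' v := by
  rw [Lop, Lop, hK, real_inner_comm]

theorem Orthonormal.sum_inner_smul_eq_of_mem_span {𝕜 ι E : Type*} [RCLike 𝕜] [Fintype ι]
    [NormedAddCommGroup E] [InnerProductSpace 𝕜 E] {u : ι → E} (hu : Orthonormal 𝕜 u) {x : E}
    (hx : x ∈ span 𝕜 (Set.range u)) : ∑ i, inner 𝕜 (u i) x • u i = x := by
  obtain ⟨c, rfl⟩ := (Submodule.mem_span_range_iff_exists_fun 𝕜).1 hx
  simp only [hu.inner_right_fintype]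

/-- The pointwise data of Case `C_m`, with `μ` written as `λ₁/2 - η`: for `η = √(λ₁² - 4ε)/2`
this is the paper's `μ`, and `ε = λ₁²/4 - η²`. -/
structure IsCaseCFrame (ε lam1 η : ℝ) (K : V →ₗ[ℝ] V →ₗ[ℝ] V) (e1 : V) : Prop where
  symm : ∀ X Y : V, K X Y = K Y X
  inner_symm : ∀ X Y Z : V, ⟪K X Y, Z⟫ = ⟪K X Z, Y⟫
  parallel : ∀ X Y Z U : V, Rc ε K X Y (K Z U) = K (Rc ε K X Y Z) U + K Z (Rc ε K X Y U)
  norm_e1 : ‖e1‖ = 1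
  K_e1_e1 : K e1 e1 = lam1 • e1
  eta_ne_zero : η ≠ 0
  eps_eq : ε = lam1 ^ 2 / 4 - η ^ 2
  Lop_mem : ∀ v ∈ D2s lam1 e1 K, ∀ v' ∈ D2s lam1 e1 K,
    Lop lam1 e1 K v v' ∈ D3s (lam1 / 2 - η) e1 K
  K_mem : ∀ v ∈ D2s lam1 e1 K, ∀ w ∈ D3s (lam1 / 2 - η) e1 K, K v w ∈ D2s lam1 e1 K

namespace IsCaseCFrame

variable {ε lam1 η : ℝ} {K : V →ₗ[ℝ] V →ₗ[ℝ] V} {e1 v v' v'' w : V}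
  (h : IsCaseCFrame ε lam1 η K e1)
include h

local notation "D₂" => D2s lam1 e1 K
local notation "D₃" => D3s (lam1 / 2 - η) e1 K

theorem inner_D2_D3 (hv : v ∈ D₂) (hw : w ∈ D₃) : ⟪v, w⟫ = 0 :=
  inner_eq_zero_of_mem_D3s h.inner_symm (fun hc => h.eta_ne_zero (by linarith)) hv hw

theorem K_e1_K (hv : v ∈ D₂) (hv' : v' ∈ D₂) :
    K e1 (K v v') = (lam1 / 2 - η) • K v v' + ((lam1 / 2 + η) * (lam1 / 2) * ⟪v, v'⟫) • e1 := by
  rw [K_eq_Lop_add lam1 e1 K v v', map_add, map_smul, h.K_e1_e1,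
    (mem_D3s_iff.1 (h.Lop_mem v hv v' hv')).2]
  module

theorem inner_K_D3 (hw : w ∈ D₃) (x : V) : ⟪x, K v w⟫ = ⟪Lop lam1 e1 K v x, w⟫ := by
  rw [real_inner_comm, h.inner_symm, K_eq_Lop_add lam1 e1 K v x, inner_add_left,
    real_inner_smul_left, real_inner_comm, (mem_D3s_iff.1 hw).1, mul_zero, add_zero]

theorem Rc_e1_D2_e1 (hv : v ∈ D₂) : Rc ε K e1 v e1 = η ^ 2 • v := by
  obtain ⟨hv1, hv2⟩ := mem_D2s_iff.1 hv
  simp only [Rc, h.K_e1_e1, map_smul, h.symm v e1, hv2,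
    inner_self_eq_one_of_norm_eq_one h.norm_e1, real_inner_comm e1 v, hv1, h.eps_eq]
  module

theorem Rc_e1_D2_D2 (hv : v ∈ D₂) (hv' : v' ∈ D₂) :
    Rc ε K e1 v v' = (-η ^ 2 * ⟪v, v'⟫) • e1 + η • Lop lam1 e1 K v v' := by
  rw [Rc, h.K_e1_K hv hv', (mem_D2s_iff.1 hv').2, map_smul, Lop, (mem_D2s_iff.1 hv').1, h.eps_eq]
  module

theorem Rc_e1_D2_D3 (hv : v ∈ D₂) (hw : w ∈ D₃) : Rc ε K e1 v w = (-η) • K v w := by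
  rw [Rc, (mem_D3s_iff.1 hw).2, map_smul, (mem_D2s_iff.1 (h.K_mem v hv w hw)).2,
    h.inner_D2_D3 hv hw, (mem_D3s_iff.1 hw).1]
  module

theorem Rc_e1_D3_e1 (hw : w ∈ D₃) : Rc ε K e1 w e1 = 0 := by
  obtain ⟨hw1, hw2⟩ := mem_D3s_iff.1 hw
  simp only [Rc, h.K_e1_e1, map_smul, h.symm w e1, hw2,
    inner_self_eq_one_of_norm_eq_one h.norm_e1, real_inner_comm e1 w, hw1, h.eps_eq]
  module

theorem Rc_e1_D3_D2 (hw : w ∈ D₃) (hv : v ∈ D₂) : Rc ε K e1 w v = 0 := by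
  simp only [Rc, h.symm w v, (mem_D2s_iff.1 (h.K_mem v hv w hw)).2, map_smul,
    (mem_D2s_iff.1 hv).2, real_inner_comm v w, h.inner_D2_D3 hv hw,
    (mem_D2s_iff.1 hv).1]
  module

theorem Rc_D2_D3_e1 (hv : v ∈ D₂) (hw : w ∈ D₃) : Rc ε K v w e1 = η • K v w := by
  simp only [Rc, h.symm w e1, h.symm v e1, (mem_D3s_iff.1 hw).2, (mem_D2s_iff.1 hv).2, map_smul,
    real_inner_comm e1 w, real_inner_comm e1 v, (mem_D3s_iff.1 hw).1, (mem_D2s_iff.1 hv).1,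
    h.symm w v]
  module

theorem K_e1_K_Lop (hv : v ∈ D₂) (hv' : v' ∈ D₂) (hw : w ∈ D₃) :
    K e1 (K w (Lop lam1 e1 K v v')) =
      (ε * ⟪w, Lop lam1 e1 K v v'⟫) • e1 + (lam1 / 2 - η) • K w (Lop lam1 e1 K v v') := by
  have hL := mem_D3s_iff.1 (h.Lop_mem v hv v' hv')
  have h0 : Rc ε K e1 w (K v v') = 0 := by
    rw [h.parallel, h.Rc_e1_D3_D2 hw hv, h.Rc_e1_D3_D2 hw hv', map_zero, map_zero,
      LinearMap.zero_apply, zero_add]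
  rw [K_eq_Lop_add lam1 e1 K v v', Rc_add_right, Rc_smul_right, h.Rc_e1_D3_e1 hw, smul_zero,
    add_zero, Rc, hL.2, map_smul, hL.1] at h0
  linear_combination (norm := module) -h0

theorem cyclic_K_Lop (hv : v ∈ D₂) (hv' : v' ∈ D₂) (hv'' : v'' ∈ D₂) :
    K v (Lop lam1 e1 K v' v'') + K v' (Lop lam1 e1 K v v'') + K v'' (Lop lam1 e1 K v v') =
      (η * lam1 / 2) • (⟪v', v''⟫ • v + ⟪v, v'⟫ • v'' + ⟪v, v''⟫ • v') := by
  have h0 := h.parallel e1 v v' v''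
  rw [K_eq_Lop_add lam1 e1 K v' v'', Rc_add_right, Rc_smul_right, h.Rc_e1_D2_e1 hv,
    h.Rc_e1_D2_D3 hv (h.Lop_mem v' hv' v'' hv''), h.Rc_e1_D2_D2 hv hv',
    h.Rc_e1_D2_D2 hv hv''] at h0
  simp only [map_add, map_smul, LinearMap.add_apply, LinearMap.smul_apply] at h0
  rw [(mem_D2s_iff.1 hv'').2, h.symm (Lop lam1 e1 K v v') v'', h.symm v' e1,
    (mem_D2s_iff.1 hv').2] at h0
  apply smul_right_injective V h.eta_ne_zero
  linear_combination (norm := module) -h0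

theorem K_D3_Lop (hv : v ∈ D₂) (hv' : v' ∈ D₂) (hw : w ∈ D₃) :
    K w (Lop lam1 e1 K v v') = K v' (K v w) + K v (K v' w) +
      (η * (lam1 / 2 - η) * ⟪v, v'⟫) • w +
      ((-lam1 / 2 - η) * ⟪Lop lam1 e1 K v v', w⟫) • e1 := by
  have h0 := h.parallel v w e1 v'
  rw [(mem_D2s_iff.1 hv').2, Rc_smul_right, h.Rc_D2_D3_e1 hv hw, map_smul, LinearMap.smul_apply,
    h.symm (K v w) v', Rc, real_inner_comm v' w, h.inner_D2_D3 hv' hw, h.symm w v',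
    K_eq_Lop_add lam1 e1 K v v', map_add (K w), map_smul (K w), h.symm w e1,
    (mem_D3s_iff.1 hw).2] at h0
  simp only [map_add, map_sub, map_smul] at h0
  rw [(mem_D2s_iff.1 hv).2, (mem_D3s_iff.1 hw).2, h.K_e1_K hv (h.K_mem v' hv' w hw),
    h.K_e1_K_Lop hv hv' hw, h.inner_K_D3 hw, Lop_comm h.symm v' v,
    real_inner_comm (Lop lam1 e1 K v v') w, h.eps_eq] at h0
  apply smul_right_injective V h.eta_ne_zero
  linear_combination (norm := module) h0

theorem K_Lop_self (hv : v ∈ D₂) (hvv : ⟪v, v⟫ = 1) :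
    K v (Lop lam1 e1 K v v) = (η * lam1 / 2) • v := by
  have h3 := h.cyclic_K_Lop hv hv hv
  rw [hvv] at h3
  apply smul_right_injective V (three_ne_zero (α := ℝ))
  linear_combination (norm := module) h3

theorem K_Lop_self_of_inner_eq_zero (hv : v ∈ D₂) (hv' : v' ∈ D₂) (hvv : ⟪v, v⟫ = 1)
    (hvv' : ⟪v, v'⟫ = 0) :
    K v' (Lop lam1 e1 K v v) = (η * lam1 / 2) • v' - (2 : ℝ) • K v (Lop lam1 e1 K v v') := by
  have h3 := h.cyclic_K_Lop hv' hv hv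
  rw [hvv, real_inner_comm, hvv', Lop_comm h.symm v' v] at h3
  linear_combination (norm := module) h3

theorem four_smul_K_K_Lop (hv : v ∈ D₂) (hv' : v' ∈ D₂) (hvv : ⟪v, v⟫ = 1)
    (hvv' : ⟪v, v'⟫ = 0) :
    (4 : ℝ) • K v (K v (Lop lam1 e1 K v v')) = (η * (η + lam1 / 2)) • Lop lam1 e1 K v v' := by
  have hKvv' : K v v' = Lop lam1 e1 K v v' := by rw [Lop, hvv', mul_zero, zero_smul, sub_zero]
  have hw := h.Lop_mem v hv v' hv'
  have h1 := h.K_D3_Lop hv hv hw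
  have h2 := h.K_D3_Lop hv hv' (h.Lop_mem v hv v hv)
  rw [h.K_Lop_self hv hvv, h.K_Lop_self_of_inner_eq_zero hv hv' hvv hvv', map_smul, map_sub,
    map_smul, map_smul, h.symm v' v, hKvv', hvv', real_inner_comm] at h2
  rw [h.symm, hvv] at h1
  linear_combination (norm := module) h2 - h1

theorem inner_Lop_self_Lop (hlam1 : lam1 ≠ 0) (hv : v ∈ D₂) (hv' : v' ∈ D₂) (hvv : ⟪v, v⟫ = 1)
    (hvv' : ⟪v, v'⟫ = 0) : ⟪Lop lam1 e1 K v v, Lop lam1 e1 K v v'⟫ = 0 := by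
  have hw := mem_D3s_iff.1 (h.Lop_mem v hv v' hv')
  have he1 := congrArg (⟪·, e1⟫) (h.four_smul_K_K_Lop hv hv' hvv hvv')
  simp only [real_inner_smul_left] at he1
  rw [h.inner_symm, h.symm v e1, (mem_D2s_iff.1 hv).2, real_inner_smul_left, real_inner_comm,
    h.inner_symm, K_eq_Lop_add lam1 e1 K v v, inner_add_left, real_inner_smul_left,
    real_inner_comm e1, hw.1] at he1
  have : lam1 * ⟪Lop lam1 e1 K v v, Lop lam1 e1 K v v'⟫ = 0 := by linear_combination he1 / 2
  exact (mul_eq_zero.1 this).resolve_left hlam1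

theorem sum_smul_Lop {ι : Type*} [Fintype ι] {u : ι → V} (hu : Orthonormal ℝ u)
    (hspan : span ℝ (Set.range u) = D₂) (hlam1 : lam1 ≠ 0) (j : ι) (huj : u j ∈ D₂)
    (hv' : v' ∈ D₂) (hjv' : ⟪u j, v'⟫ = 0) :
    ∑ i, (4 * ⟪Lop lam1 e1 K (u j) (u i), Lop lam1 e1 K (u j) v'⟫) • Lop lam1 e1 K (u i) (u j) =
      (η * (η + lam1 / 2)) • Lop lam1 e1 K (u j) v' := by
  set w := Lop lam1 e1 K (u j) v'
  have hw : w ∈ D₃ := h.Lop_mem _ huj v' hv'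
  have hjj : ⟪u j, u j⟫ = 1 := inner_self_eq_one_of_norm_eq_one (hu.1 j)
  have hexp : ∑ i, ⟪Lop lam1 e1 K (u j) (u i), w⟫ • u i = K (u j) w := by
    have hKw := hu.sum_inner_smul_eq_of_mem_span (hspan ▸ h.K_mem _ huj w hw)
    simpa only [h.inner_K_D3 hw (u _)] using hKw
  have hLsum : ∑ i, ⟪Lop lam1 e1 K (u j) (u i), w⟫ • Lop lam1 e1 K (u j) (u i) =
      Lop lam1 e1 K (u j) (K (u j) w) := by
    conv_rhs => rw [← hexp]
    simp only [Lop, map_sum, map_smul, inner_sum, real_inner_smul_right, smul_sub,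
      Finset.sum_sub_distrib, smul_smul, Finset.mul_sum, Finset.sum_smul]
    congr 1
    exact Finset.sum_congr rfl fun i _ => by ring_nf
  calc ∑ i, (4 * ⟪Lop lam1 e1 K (u j) (u i), w⟫) • Lop lam1 e1 K (u i) (u j)
      = (4 : ℝ) • Lop lam1 e1 K (u j) (K (u j) w) := by
        rw [← hLsum, Finset.smul_sum]
        exact Finset.sum_congr rfl fun i _ => by rw [smul_smul, Lop_comm h.symm (u i)]
    _ = (4 : ℝ) • K (u j) (K (u j) w) := by
        rw [Lop, h.inner_K_D3 hw, h.inner_Lop_self_Lop hlam1 huj hv' hjj hjv', mul_zero,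
          zero_smul, sub_zero]
    _ = (η * (η + lam1 / 2)) • w := h.four_smul_K_K_Lop huj hv' hjj hjv'

end IsCaseCFrame

theorem stmt_9_general {V : Type*} [NormedAddCommGroup V] [InnerProductSpace ℝ V]
    (m : ℕ)
    (ε : ℝ)
    (K : V →ₗ[ℝ] V →ₗ[ℝ] V)
    (hKsymm : ∀ X Y : V, K X Y = K Y X)
    (hKcub : ∀ X Y Z : V, ⟪K X Y, Z⟫ = ⟪K X Z, Y⟫)
    (hpar : ∀ X Y Z U : V,
      Rc ε K X Y (K Z U) = K (Rc ε K X Y Z) U + K Z (Rc ε K X Y U))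
    (e1 : V) (he1 : ‖e1‖ = 1)
    (lam1 η μ τ : ℝ)
    (hlam1 : lam1 = ⟪K e1 e1, e1⟫) (hlam1pos : 0 < lam1)
    (hdisc : 0 < lam1 ^ 2 - 4 * ε)
    (hη : η = Real.sqrt (lam1 ^ 2 - 4 * ε) / 2)
    (hμ : μ = (lam1 - Real.sqrt (lam1 ^ 2 - 4 * ε)) / 2)
    (hτ : τ = η * (η + lam1 / 2) / 4)
    (hsplit : (ℝ ∙ e1) ⊔ D2s lam1 e1 K ⊔ D3s μ e1 K = ⊤)
    (hLD3 : ∀ v1 ∈ D2s lam1 e1 K, ∀ v2 ∈ D2s lam1 e1 K,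
      Lop lam1 e1 K v1 v2 ∈ D3s μ e1 K)
    (hKD2 : ∀ v ∈ D2s lam1 e1 K, ∀ w ∈ D3s μ e1 K, K v w ∈ D2s lam1 e1 K)
    (u : Fin (m - 1) → V) (huD2 : ∀ i, u i ∈ D2s lam1 e1 K)
    (huON : Orthonormal ℝ u)
    (huspan : Submodule.span ℝ (Set.range u) = D2s lam1 e1 K) :
    ∀ j p : Fin (m - 1), p ≠ j →
      ((0 : V) =
        (η * (η + lam1 / 2) -
            4 * ⟪Lop lam1 e1 K (u j) (u p), Lop lam1 e1 K (u j) (u p)⟫) •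
            Lop lam1 e1 K (u j) (u p) -
          ∑ i ∈ Finset.univ.erase p,
            (4 * ⟪Lop lam1 e1 K (u j) (u i), Lop lam1 e1 K (u j) (u p)⟫) •
              Lop lam1 e1 K (u i) (u j)) ∧
      (Lop lam1 e1 K (u j) (u p) ≠ 0 →
        (∀ i, i ≠ p → ⟪Lop lam1 e1 K (u j) (u i), Lop lam1 e1 K (u j) (u p)⟫ = 0) →
        ⟪Lop lam1 e1 K (u j) (u p), Lop lam1 e1 K (u j) (u p)⟫ = τ) := by
  intro j p hpj
  have hη0 : 0 < η := hη ▸ div_pos (Real.sqrt_pos.2 hdisc) two_pos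
  obtain rfl : μ = lam1 / 2 - η := by rw [hμ, hη]; ring
  have h : IsCaseCFrame ε lam1 η K e1 :=
    { symm := hKsymm
      inner_symm := hKcub
      parallel := hpar
      norm_e1 := he1
      K_e1_e1 := K_e1_e1_eq_of_sup_eq_top hKcub he1 hlam1 hsplit
      eta_ne_zero := hη0.ne'
      eps_eq := by rw [hη, div_pow, Real.sq_sqrt hdisc.le]; ring
      Lop_mem := hLD3
      K_mem := hKD2 }
  have hsum := h.sum_smul_Lop huON huspan hlam1pos.ne' j (huD2 j) (huD2 p) (huON.2 hpj.symm)
  have hrel : (0 : V) = (η * (η + lam1 / 2) -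
      4 * ⟪Lop lam1 e1 K (u j) (u p), Lop lam1 e1 K (u j) (u p)⟫) • Lop lam1 e1 K (u j) (u p) -
      ∑ i ∈ Finset.univ.erase p, (4 * ⟪Lop lam1 e1 K (u j) (u i), Lop lam1 e1 K (u j) (u p)⟫) •
        Lop lam1 e1 K (u i) (u j) := by
    rw [Finset.sum_erase_eq_sub (Finset.mem_univ p), hsum, Lop_comm hKsymm (u p) (u j)]
    module
  refine ⟨hrel, fun hne hperp => ?_⟩
  rw [Finset.sum_eq_zero fun i hi => by rw [hperp i (Finset.ne_of_mem_erase hi), mul_zero,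
    zero_smul], sub_zero, eq_comm, smul_eq_zero] at hrel
  linarith [hrel.resolve_right hne]

/-- Lemma 4.7: a linear relation among the `L(u_i,u_j)`, and in particular the
computation of `⟨L(u_j,u_p), L(u_j,u_p)⟩ = τ` under an orthogonality assumption. -/
theorem stmt_9 {V : Type*} [NormedAddCommGroup V] [InnerProductSpace ℝ V]
    (n m : ℕ) (hn : finrank ℝ V = n) (hn2 : 2 ≤ n)
    (ε : ℝ) (hε : ε = 1 ∨ ε = -1)
    (K : V →ₗ[ℝ] V →ₗ[ℝ] V)
    (hKsymm : ∀ X Y : V, K X Y = K Y X)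
    (hKcub : ∀ X Y Z : V, ⟪K X Y, Z⟫ = ⟪K X Z, Y⟫)
    (hpar : ∀ X Y Z U : V,
      Rc ε K X Y (K Z U) = K (Rc ε K X Y Z) U + K Z (Rc ε K X Y U))
    (e1 : V) (he1 : ‖e1‖ = 1)
    (lam1 η μ τ : ℝ)
    (hlam1 : lam1 = ⟪K e1 e1, e1⟫) (hlam1pos : 0 < lam1)
    (hmax : ∀ u : V, ‖u‖ = 1 → ⟪K u u, u⟫ ≤ lam1)
    (hdisc : 0 < lam1 ^ 2 - 4 * ε)
    (hη : η = Real.sqrt (lam1 ^ 2 - 4 * ε) / 2)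
    (hμ : μ = (lam1 - Real.sqrt (lam1 ^ 2 - 4 * ε)) / 2)
    (hτ : τ = η * (η + lam1 / 2) / 4)
    (hm2 : 2 ≤ m) (hmn : m ≤ n - 1)
    (hdimD2 : finrank ℝ (D2s lam1 e1 K) = m - 1)
    (hsplit : (ℝ ∙ e1) ⊔ D2s lam1 e1 K ⊔ D3s μ e1 K = ⊤)
    (hLD3 : ∀ v1 ∈ D2s lam1 e1 K, ∀ v2 ∈ D2s lam1 e1 K,
      Lop lam1 e1 K v1 v2 ∈ D3s μ e1 K)
    (hKD2 : ∀ v ∈ D2s lam1 e1 K, ∀ w ∈ D3s μ e1 K, K v w ∈ D2s lam1 e1 K)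
    (hm3 : 3 ≤ m)
    (u : Fin (m - 1) → V) (huD2 : ∀ i, u i ∈ D2s lam1 e1 K)
    (huON : Orthonormal ℝ u)
    (huspan : Submodule.span ℝ (Set.range u) = D2s lam1 e1 K) :
    ∀ j p : Fin (m - 1), p ≠ j →
      ((0 : V) =
        (η * (η + lam1 / 2) -
            4 * ⟪Lop lam1 e1 K (u j) (u p), Lop lam1 e1 K (u j) (u p)⟫) •
            Lop lam1 e1 K (u j) (u p) -
          ∑ i ∈ Finset.univ.erase p,
            (4 * ⟪Lop lam1 e1 K (u j) (u i), Lop lam1 e1 K (u j) (u p)⟫) •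
              Lop lam1 e1 K (u i) (u j)) ∧
      (Lop lam1 e1 K (u j) (u p) ≠ 0 →
        (∀ i, i ≠ p → ⟪Lop lam1 e1 K (u j) (u i), Lop lam1 e1 K (u j) (u p)⟫ = 0) →
        ⟪Lop lam1 e1 K (u j) (u p), Lop lam1 e1 K (u j) (u p)⟫ = τ) :=
  stmt_9_general m ε K hKsymm hKcub hpar e1 he1 lam1 η μ τ hlam1 hlam1pos hdisc hη hμ hτ hsplit hLD3
    hKD2 u huD2 huON huspan
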